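/- Let R be a commutative Noetherian ring, a an ideal of R, x an element of a, and M an R-module with Supp_R(M) ⊆ V(a). If both the submodule (0 :_M x) = {m ∈ M : x·m = 0} and the quotient module M/xM are a-cominimax, then M is a-cominimax. -/

import Mathlib

open CategoryTheory

universe u

/-- An `R`-module is *minimax* if it has a finitely generated submodule
whose quotient is Artinian. -/
def IsMinimax (R : Type u) [CommRing R] (M : Type u) [AddCommGroup M]
    [Module R M] : Prop :=
  ∃ N : Submodule R M, N.FG ∧ IsArtinian R (M ⧸ N)

/-- The Ext module `Ext^i_R(X, M)`. -/
noncomputable def extModule (R : Type u) [CommRing R]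
    (X : Type u) [AddCommGroup X] [Module R X]
    (M : Type u) [AddCommGroup M] [Module R M] (i : ℕ) : ModuleCat.{u} R :=
  ((Ext R (ModuleCat.{u} R) i).obj (Opposite.op (ModuleCat.of R X))).obj
    (ModuleCat.of R M)

/-- The Ext module `Ext^i_R(R/a, M)`. -/
noncomputable def extQuotModule (R : Type u) [CommRing R] (a : Ideal R)
    (M : Type u) [AddCommGroup M] [Module R M] (i : ℕ) : ModuleCat.{u} R :=
  extModule R (R ⧸ a) M i

/-- An `R`-module `M` is `a`-cominimax if `Supp M ⊆ V(a)` and all the modules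
`Ext^i_R(R/a, M)` are minimax. -/
def IsCominimax (R : Type u) [CommRing R] (a : Ideal R) (M : Type u)
    [AddCommGroup M] [Module R M] : Prop :=
  Module.support R M ⊆ PrimeSpectrum.zeroLocus (a : Set R) ∧
    ∀ i : ℕ, IsMinimax R (extQuotModule R a M i)

section MinimaxLemmas

variable {R : Type u} [CommRing R] [IsNoetherianRing R]
  {A B : Type u} [AddCommGroup A] [Module R A] [AddCommGroup B] [Module R B]

theorem IsMinimax.of_injective (f : A →ₗ[R] B) (hf : Function.Injective f)
    (h : IsMinimax R B) : IsMinimax R A := by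
  obtain ⟨N, hfg, hart⟩ := h
  refine ⟨N.comap f, ?_, ?_⟩
  · have : IsNoetherian R N := isNoetherian_of_fg_of_noetherian N hfg
    have : IsNoetherian R (N.comap f) :=
      isNoetherian_of_injective (f.restrict (fun x hx => hx)) fun x y hxy => by
        apply Subtype.ext; exact hf (Subtype.ext_iff.1 hxy)
    exact (Submodule.fg_top _).1 (IsNoetherian.noetherian _)
  · refine isArtinian_of_injective ((N.comap f).liftQ (N.mkQ.comp f) (by
      intro x hx; simpa using hx)) ?_
    rw [← LinearMap.ker_eq_bot, Submodule.ker_liftQ_eq_bot]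
    · intro x hx
      simpa using hx

omit [IsNoetherianRing R] in
theorem IsMinimax.of_surjective (f : A →ₗ[R] B) (hf : Function.Surjective f)
    (h : IsMinimax R A) : IsMinimax R B := by
  obtain ⟨N, hfg, hart⟩ := h
  refine ⟨N.map f, hfg.map f, ?_⟩
  refine isArtinian_of_surjective _ (Submodule.mapQ N (N.map f) f
    (fun x hx => Submodule.mem_map_of_mem hx)) ?_
  intro y
  obtain ⟨b, rfl⟩ := Submodule.mkQ_surjective _ y
  obtain ⟨a, rfl⟩ := hf b
  exact ⟨Submodule.Quotient.mk a, rfl⟩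

omit [IsNoetherianRing R] in
theorem IsMinimax.of_submodule_quotient (S : Submodule R A)
    (h1 : IsMinimax R S) (h2 : IsMinimax R (A ⧸ S)) : IsMinimax R A := by
  obtain ⟨N₁, hN₁fg, hN₁art⟩ := h1
  obtain ⟨N₂, hN₂fg, hN₂art⟩ := h2
  obtain ⟨s, hs⟩ := hN₂fg
  choose lift hliftspec using fun y : A ⧸ S => Submodule.Quotient.mk_surjective S y
  set T : Submodule R A := Submodule.span R (lift '' (↑s : Set (A ⧸ S))) with hT
  have hTmap : T.map S.mkQ = N₂ := by
    rw [hT, Submodule.map_span, ← hs, ← Set.image_comp]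
    have hid : (⇑S.mkQ ∘ lift) = id := funext fun y => by
      simpa [Submodule.mkQ_apply] using hliftspec y
    rw [hid, Set.image_id]
  set N : Submodule R A := N₁.map S.subtype ⊔ T with hN
  have hTfg : T.FG := Submodule.fg_span ((s.finite_toSet).image lift)
  refine ⟨N, Submodule.FG.sup (hN₁fg.map _) hTfg, ?_⟩
  have h₁ : N₁ ≤ LinearMap.ker (N.mkQ.comp S.subtype) := by
    intro x hx
    simp only [LinearMap.mem_ker, LinearMap.comp_apply, Submodule.mkQ_apply,
      Submodule.Quotient.mk_eq_zero]
    exact le_sup_left (α := Submodule R A) (Submodule.mem_map_of_mem hx)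
  have h₂ : N ≤ LinearMap.ker (N₂.mkQ.comp S.mkQ) := by
    rw [hN]
    refine sup_le ?_ ?_
    · rintro x ⟨y, _, rfl⟩
      have hy0 : S.mkQ ↑y = 0 := (Submodule.Quotient.mk_eq_zero S).2 y.2
      simp [LinearMap.mem_ker, hy0]
    · intro x hx
      simp only [LinearMap.mem_ker, LinearMap.comp_apply, Submodule.mkQ_apply,
        Submodule.Quotient.mk_eq_zero]
      rw [← hTmap]
      exact ⟨x, hx, rfl⟩
  refine isArtinian_of_range_eq_ker (N₁.liftQ (N.mkQ.comp S.subtype) h₁)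
    (N.liftQ (N₂.mkQ.comp S.mkQ) h₂) ?_
  rw [Submodule.range_liftQ, Submodule.ker_liftQ]
  have hker : LinearMap.ker (N₂.mkQ.comp S.mkQ) = S ⊔ T := by
    rw [LinearMap.ker_comp, Submodule.ker_mkQ, ← hTmap, Submodule.comap_map_mkQ, sup_comm]
  rw [hker]
  have hrange : LinearMap.range (N.mkQ.comp S.subtype) = S.map N.mkQ := by
    rw [LinearMap.range_comp, Submodule.range_subtype]
  rw [hrange, Submodule.map_sup]
  have hTbot : T.map N.mkQ = ⊥ := by
    rw [Submodule.eq_bot_iff]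
    rintro y ⟨x, hx, rfl⟩
    simpa [Submodule.Quotient.mk_eq_zero] using
      (le_sup_right (α := Submodule R A) hx : x ∈ N)
  rw [hTbot, sup_bot_eq]

end MinimaxLemmas

section ChainLevel

variable {R : Type u} [CommRing R]

noncomputable section

variable {X : ModuleCat.{u} R} (P : ProjectiveResolution X)

/-- The complex `Hom(P_•, Y)`. -/
abbrev Kc (Y : ModuleCat.{u} R) := P.complex.linearYonedaObj R Y

/-- Functoriality of `Hom(P_•, -)`. -/
def Km {A B : ModuleCat.{u} R} (f : A ⟶ B) : Kc P A ⟶ Kc P B where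
  f n := ModuleCat.ofHom (Linear.rightComp R (P.complex.X n) f)
  comm' i j _ := by ext g; rfl

lemma Km_comp {A B C : ModuleCat.{u} R} (f : A ⟶ B) (g : B ⟶ C) :
    Km P (f ≫ g) = Km P f ≫ Km P g := by ext n φ; rfl

/-- The short complex of cochain complexes induced by a SES of modules. -/
def Sc {A B C : ModuleCat.{u} R} (f : A ⟶ B) (g : B ⟶ C) (hfg : f ≫ g = 0) :
    ShortComplex (CochainComplex (ModuleCat.{u} R) ℕ) :=
  ShortComplex.mk (Km P f) (Km P g) (by rw [← Km_comp, hfg]; ext n φ; rfl)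

lemma Sc_shortExact {A B C : ModuleCat.{u} R} (f : A ⟶ B) (g : B ⟶ C) (hfg : f ≫ g = 0)
    (hinj : Function.Injective f) (hsurj : Function.Surjective g)
    (hex : ∀ b : B, g b = 0 → ∃ a : A, f a = b) :
    (Sc P f g hfg).ShortExact := by
  apply HomologicalComplex.shortExact_of_degreewise_shortExact
  intro n
  haveI hproj2 : Projective (P.complex.X n) := P.projective n
  haveI : Epi g := (ModuleCat.epi_iff_surjective g).2 hsurj
  refine { exact := ?_, mono_f := ?_, epi_g := ?_ }
  · rw [ShortComplex.moduleCat_exact_iff]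
    show ∀ (φ : P.complex.X n ⟶ B), _ → _
    intro φ hφ
    have hφ' : φ ≫ g = 0 := hφ
    have hmem : ∀ p, φ p ∈ LinearMap.range f.hom := by
      intro p
      obtain ⟨a, ha⟩ := hex (φ p)
        (show (φ ≫ g) p = 0 by rw [hφ']; rfl)
      exact ⟨a, ha⟩
    refine ⟨ModuleCat.ofHom ((LinearEquiv.ofInjective f.hom hinj).symm.toLinearMap.comp
      (LinearMap.codRestrict (LinearMap.range f.hom) φ.hom hmem)), ?_⟩
    show (ModuleCat.ofHom ((LinearEquiv.ofInjective f.hom hinj).symm.toLinearMap.comp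
      (LinearMap.codRestrict (LinearMap.range f.hom) φ.hom hmem)) : P.complex.X n ⟶ A) ≫ f = φ
    ext p
    exact congrArg Subtype.val
      ((LinearEquiv.ofInjective f.hom hinj).apply_symm_apply ⟨φ p, hmem p⟩)
  · rw [ModuleCat.mono_iff_injective]
    intro ψ₁ ψ₂ h
    exact ModuleCat.hom_ext (LinearMap.ext fun p => hinj (congrArg (fun (ρ : P.complex.X n ⟶ B) => ρ p) h))
  · rw [ModuleCat.epi_iff_surjective]
    intro φ
    exact ⟨Projective.factorThru φ g, by exact Projective.factorThru_comp φ g⟩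

lemma smul_homotopy_zero (x : R) (hX : x • (𝟙 X) = 0) (M : ModuleCat.{u} R) (i : ℕ) :
    HomologicalComplex.homologyMap (Km P (x • 𝟙 M)) i = 0 := by
  have hπ : (x • 𝟙 P.complex) ≫ P.π = 0 := by
    rw [Linear.smul_comp]
    apply HomologicalComplex.hom_ext
    intro n
    match n with
    | 0 =>
      have hX' : x • 𝟙 (((ChainComplex.single₀ (ModuleCat R)).obj X).X 0) = 0 := hX
      have h00 : P.π.f 0 ≫ (x • 𝟙 _) = 0 := by rw [hX', Limits.comp_zero]
      suffices h : x • P.π.f 0 = 0 by simpa using h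
      ext p
      have := congrArg (fun h => h (P.π.f 0 p)) hX
      exact this
    | n + 1 =>
      apply (HomologicalComplex.isZero_single_obj_X (ComplexShape.down ℕ) 0 X (n + 1)
        (by omega)).eq_of_tgt
  have H : Homotopy (x • 𝟙 P.complex) 0 := P.liftHomotopyZero _ hπ
  have HK : Homotopy (Km P (x • 𝟙 M)) 0 := by
    refine ⟨fun i j => (ModuleCat.ofHom (Linear.leftComp R M (H.hom j i)) :
      (Kc P M).X i ⟶ (Kc P M).X j), ?_, ?_⟩
    · intro i j hij
      have h0 : H.hom j i = 0 := H.zero j i (by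
        intro h
        exact hij h)
      dsimp only
      rw [h0]
      ext g : 2
      show (0 : P.complex.X j ⟶ P.complex.X i) ≫ g = 0
      simp
    · intro n
      have hPc : x • 𝟙 (P.complex.X n) =
          P.complex.d n (n - 1) ≫ H.hom (n - 1) n + H.hom n (n + 1) ≫ P.complex.d (n + 1) n := by
        have hc := H.comm n
        rw [dNext_nat, prevD_eq H.hom (show (ComplexShape.down ℕ).Rel (n + 1) n from rfl)] at hc
        simpa using hc
      erw [prevD_nat, dNext_eq _ (show (ComplexShape.up ℕ).Rel n (n + 1) from rfl),
        HomologicalComplex.zero_f, add_zero]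
      ext g : 2
      change P.complex.X n ⟶ M at g
      have hg := congrArg (fun (φ : P.complex.X n ⟶ P.complex.X n) => φ ≫ g) hPc
      simp only [Linear.smul_comp, Preadditive.add_comp, Category.assoc, Category.id_comp] at hg
      show x • g = _
      rw [hg, add_comm]
      rfl
  rw [HK.homologyMap_eq, HomologicalComplex.homologyMap_zero]

end
end ChainLevel

theorem cominimax_of_torsionBy_and_quotient_cominimax
    (R : Type u) [CommRing R] [IsNoetherianRing R]
    (a : Ideal R) (x : R) (hx : x ∈ a)
    (M : Type u) [AddCommGroup M] [Module R M]
    (hsupp : Module.support R M ⊆ PrimeSpectrum.zeroLocus (a : Set R))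
    (h1 : IsCominimax R a (Submodule.torsionBy R M x))
    (h2 : IsCominimax R a (M ⧸ LinearMap.range (LinearMap.lsmul R M x))) :
    IsCominimax R a M := by
  classical
  set X : ModuleCat.{u} R := ModuleCat.of R (R ⧸ a) with hXdef
  obtain ⟨P⟩ : Nonempty (ProjectiveResolution X) := HasProjectiveResolution.out
  -- `x` acts as zero on `R ⧸ a`
  have hX0 : x • (𝟙 X) = 0 := by
    apply ModuleCat.hom_ext; apply LinearMap.ext; intro r
    obtain ⟨r, rfl⟩ := Ideal.Quotient.mk_surjective r
    show x • (Ideal.Quotient.mk a r) = 0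
    have hmk : x • (Ideal.Quotient.mk a r) = Ideal.Quotient.mk a (x * r) := rfl
    rw [hmk, Ideal.Quotient.eq_zero_iff_mem]
    exact Ideal.mul_mem_right r a hx
  -- the three modules
  set K : ModuleCat.{u} R := ModuleCat.of R (Submodule.torsionBy R M x)
  set Mc : ModuleCat.{u} R := ModuleCat.of R M
  set xM : ModuleCat.{u} R := ModuleCat.of R (LinearMap.range (LinearMap.lsmul R M x))
  set Q : ModuleCat.{u} R := ModuleCat.of R (M ⧸ LinearMap.range (LinearMap.lsmul R M x))
  -- morphisms
  set f₁ : K ⟶ Mc := ModuleCat.ofHom (Submodule.torsionBy R M x).subtype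
  set g₁ : Mc ⟶ xM := ModuleCat.ofHom (LinearMap.lsmul R M x).rangeRestrict
  set f₂ : xM ⟶ Mc := ModuleCat.ofHom (LinearMap.range (LinearMap.lsmul R M x)).subtype
  set g₂ : Mc ⟶ Q := ModuleCat.ofHom (LinearMap.range (LinearMap.lsmul R M x)).mkQ
  have hfg₁ : f₁ ≫ g₁ = 0 := by
    ext m
    exact (Submodule.mem_torsionBy_iff _ _).1 m.2
  have hfg₂ : f₂ ≫ g₂ = 0 := by
    ext m
    exact (Submodule.Quotient.mk_eq_zero _).2 m.2
  have hS1 : (Sc P f₁ g₁ hfg₁).ShortExact := by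
    apply Sc_shortExact P f₁ g₁ hfg₁
    · exact Subtype.val_injective
    · exact (LinearMap.lsmul R M x).surjective_rangeRestrict
    · intro b hb
      have : x • b = 0 := congrArg Subtype.val hb
      exact ⟨⟨b, this⟩, rfl⟩
  have hS2 : (Sc P f₂ g₂ hfg₂).ShortExact := by
    apply Sc_shortExact P f₂ g₂ hfg₂
    · exact Subtype.val_injective
    · exact Submodule.Quotient.mk_surjective _
    · intro b hb
      exact ⟨⟨b, (Submodule.Quotient.mk_eq_zero _).1 hb⟩, rfl⟩
  have hcomp : g₁ ≫ f₂ = x • 𝟙 Mc := by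
    ext m
    rfl
  refine ⟨hsupp, fun i => ?_⟩
  -- homology modules, LES maps
  have hTmin : IsMinimax R ((Kc P K).homology (i + 1)) :=
    IsMinimax.of_injective
      ((P.isoExt (i + 1) K).symm.toLinearEquiv.toLinearMap)
      (P.isoExt (i + 1) K).symm.toLinearEquiv.injective (h1.2 (i + 1))
  have hWmin : IsMinimax R ((Kc P Q).homology i) :=
    IsMinimax.of_injective
      ((P.isoExt i Q).symm.toLinearEquiv.toLinearMap)
      (P.isoExt i Q).symm.toLinearEquiv.injective (h2.2 i)
  set u : (Kc P Mc).homology i ⟶ (Kc P xM).homology i :=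
    HomologicalComplex.homologyMap (Km P g₁) i with hu
  set δ : (Kc P xM).homology i ⟶ (Kc P K).homology (i + 1) :=
    hS1.δ i (i + 1) rfl with hδ
  set v : (Kc P xM).homology i ⟶ (Kc P Mc).homology i :=
    HomologicalComplex.homologyMap (Km P f₂) i with hv
  set w : (Kc P Mc).homology i ⟶ (Kc P Q).homology i :=
    HomologicalComplex.homologyMap (Km P g₂) i with hw
  have hex1 : LinearMap.range u.hom = LinearMap.ker δ.hom :=
    (hS1.homology_exact₃ i (i + 1) rfl).moduleCat_range_eq_ker
  have hex2 : LinearMap.range v.hom = LinearMap.ker w.hom :=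
    (hS2.homology_exact₂ i).moduleCat_range_eq_ker
  have hvu : u ≫ v = 0 := by
    rw [hu, hv, ← HomologicalComplex.homologyMap_comp, ← Km_comp, hcomp]
    exact smul_homotopy_zero P x hX0 Mc i
  have hvu' : LinearMap.range u.hom ≤ LinearMap.ker v.hom := by
    rintro _ ⟨e, rfl⟩
    exact congrArg (fun ρ => ρ.hom e) hvu
  -- D ⧸ range u is minimax
  have hDmin : IsMinimax R ((Kc P xM).homology i ⧸ LinearMap.range u.hom) := by
    refine IsMinimax.of_injective
      ((LinearMap.range u.hom).liftQ δ.hom (le_of_eq hex1)) ?_ hTmin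
    rw [← LinearMap.ker_eq_bot, Submodule.ker_liftQ_eq_bot]
    exact le_of_eq hex1.symm
  -- range v is minimax
  have hVmin : IsMinimax R (LinearMap.range v.hom) := by
    have hsurj := LinearMap.surjective_rangeRestrict ((LinearMap.range u.hom).liftQ v.hom hvu')
    have h := IsMinimax.of_surjective _ hsurj hDmin
    rwa [Submodule.range_liftQ] at h
  -- quotient by range v is minimax
  have hQmin : IsMinimax R ((Kc P Mc).homology i ⧸ LinearMap.range v.hom) := by
    refine IsMinimax.of_injective
      ((LinearMap.range v.hom).liftQ w.hom (le_of_eq hex2)) ?_ hWmin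
    rw [← LinearMap.ker_eq_bot, Submodule.ker_liftQ_eq_bot]
    exact le_of_eq hex2.symm
  have hEmin : IsMinimax R ((Kc P Mc).homology i) :=
    IsMinimax.of_submodule_quotient _ hVmin hQmin
  exact IsMinimax.of_injective ((P.isoExt i Mc).toLinearEquiv.toLinearMap)
    (P.isoExt i Mc).toLinearEquiv.injective hEmin
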